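/- arXiv:1309.7506 — 12 statements merged into one kernel-verified Lean document; each statement's English description precedes it below -/
import Mathlib

section
/- Define a sequence by a₁ = 1 and a_{n+1} = (a₁ + a₂ + ... + a_n)!. Then for all indices i < j ≤ n with n ≥ j, the sum a_i + a_{i+1} + ... + a_{j-1} divides a_n. -/
/-! For `n ≥ 2`, `a n` is the factorial of `a 1 + ⋯ + a (n - 1)`. All terms are positive, so a
block `a i + ⋯ + a (j - 1)` with `j ≤ n` is a positive number not exceeding that sum, and hence
divides its factorial. -/

open Nat

theorem Finset.sum_dvd_factorial_sum_of_subset {ι : Type*} {s t : Finset ι} {f : ι → ℕ}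
    (hst : s ⊆ t) (hs : 0 < ∑ i ∈ s, f i) : (∑ i ∈ s, f i) ∣ (∑ i ∈ t, f i)! :=
  Nat.dvd_factorial hs (Finset.sum_le_sum_of_subset hst)

theorem pos_of_eq_factorial_sum {a : ℕ → ℕ} (h1 : 0 < a 1)
    (hrec : ∀ n, 1 ≤ n → a (n + 1) = (∑ m ∈ Finset.Icc 1 n, a m)!) :
    ∀ m, 1 ≤ m → 0 < a m
  | 1, _ => h1
  | k + 2, _ => hrec (k + 1) (by omega) ▸ Nat.factorial_pos _

theorem stmt_0 (a : ℕ → ℕ) (h1 : a 1 = 1)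
    (hrec : ∀ n, 1 ≤ n → a (n + 1) = Nat.factorial (∑ m ∈ Finset.Icc 1 n, a m)) :
    ∀ i j n, 1 ≤ i → i < j → j ≤ n →
      (∑ m ∈ Finset.Ico i j, a m) ∣ a n := by
  intro i j n hi hij hjn
  obtain ⟨k, rfl⟩ : ∃ k, n = k + 1 := ⟨n - 1, by omega⟩
  have hpos := pos_of_eq_factorial_sum (h1.symm ▸ Nat.one_pos) hrec
  rw [hrec k (by omega)]
  refine Finset.sum_dvd_factorial_sum_of_subset ?_ ?_
  · intro m hm
    simp only [Finset.mem_Ico, Finset.mem_Icc] at hm ⊢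
    omega
  · refine Finset.sum_pos (fun m hm => hpos m ?_) ⟨i, Finset.mem_Ico.mpr ⟨le_rfl, hij⟩⟩
    exact hi.trans (Finset.mem_Ico.mp hm).1
end

section
/- Define a sequence by a₁ = 1 and a_{n+1} = (a₁ + ... + a_n)!. Then for all indices i < j < k, the partial sum a_i + a_{i+1} + ... + a_{j-1} divides the partial sum a_j + a_{j+1} + ... + a_{k-1}. -/
open Finset

section FactorialSums

variable {a : ℕ → ℕ} (h1 : a 1 = 1)
  (hrec : ∀ n, 1 ≤ n → a (n + 1) = Nat.factorial (∑ m ∈ Icc 1 n, a m))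
include h1 hrec

theorem pos_of_factorial_sum_rec {m : ℕ} (hm : 1 ≤ m) : 0 < a m := by
  obtain rfl | ⟨n, hn, rfl⟩ : m = 1 ∨ ∃ n, 1 ≤ n ∧ m = n + 1 :=
    (eq_or_lt_of_le hm).imp Eq.symm fun h => ⟨m - 1, by omega, by omega⟩
  · simp [h1]
  · rw [hrec n hn]
    exact Nat.factorial_pos _

/-- Every earlier block sum is at most `a₁ + ⋯ + a_{m-1}`, and a positive number at most `s`
divides `s!`. -/
theorem sum_Ico_dvd_of_factorial_sum_rec {i j m : ℕ} (hi : 1 ≤ i) (hij : i < j) (hjm : j ≤ m) :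
    (∑ x ∈ Ico i j, a x) ∣ a m := by
  obtain ⟨n, rfl⟩ : ∃ n, m = n + 1 := ⟨m - 1, by omega⟩
  rw [hrec n (by omega)]
  refine Nat.dvd_factorial ?_ (sum_le_sum_of_subset fun x hx => ?_)
  · exact sum_pos (fun x hx => pos_of_factorial_sum_rec h1 hrec (by simp at hx; omega))
      ⟨i, by simpa using hij⟩
  · simp only [mem_Ico, mem_Icc] at hx ⊢
    omega

end FactorialSums

theorem stmt_1 (a : ℕ → ℕ) (h1 : a 1 = 1)
    (hrec : ∀ n, 1 ≤ n → a (n + 1) = Nat.factorial (∑ m ∈ Finset.Icc 1 n, a m)) :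
    ∀ i j k, 1 ≤ i → i < j → j < k →
      (∑ m ∈ Finset.Ico i j, a m) ∣ (∑ m ∈ Finset.Ico j k, a m) := by
  intro i j k hi hij _
  exact dvd_sum fun m hm =>
    sum_Ico_dvd_of_factorial_sum_rec h1 hrec hi hij (mem_Ico.mp hm).1
end

section
/- For every finite partition of the positive integers into l classes C₁, ..., C_l, there exist an index i and positive integers x, y, z all belonging to C_i such that x + y = z and x divides y. -/
/-!
Let `t 0 = 1` and `t (n + 1) = t n + (t n)!`. For `i < j ≤ m` we have `t j - t i ≤ t m`, so
`t j - t i` divides `(t m)!`, and summing over `j ≤ m < k` it divides `t k - t j`. Colour each pair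
`i < j` by the class of `t j - t i`. The infinite Ramsey theorem for triangles yields `i < j < k`
whose three pairs have the same colour, and then `x = t j - t i`, `y = t k - t j`, `z = t k - t i`
satisfy `x + y = z` and `x ∣ y`.
-/

open Set

theorem Set.Infinite.exists_infinite_fiber {α κ : Type*} [Finite κ] {s : Set α}
    (hs : s.Infinite) (f : α → κ) : ∃ k, {x ∈ s | f x = k}.Infinite := by
  by_contra! h
  exact hs <| (finite_iUnion h).subset fun x hx => mem_iUnion.2 ⟨f x, hx, rfl⟩

section InfiniteRamsey

variable {κ : Type*} [Finite κ] (χ : ℕ → ℕ → κ)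

lemma exists_infinite_monochromatic_above_sInf {S : Set ℕ} (hS : S.Infinite) :
    ∃ k, {x ∈ S | sInf S < x ∧ χ (sInf S) x = k}.Infinite := by
  obtain ⟨k, hk⟩ := (hS.sdiff (finite_Iic (sInf S))).exists_infinite_fiber (χ (sInf S))
  exact ⟨k, hk.mono fun _ hx => ⟨hx.1.1, not_le.1 hx.1.2, hx.2⟩⟩

/- Each step keeps the elements above the least one that are joined to it in a single colour, so
the least elements of the successive sets form a sequence in which the colour of a pair depends only
on its smaller end. -/
noncomputable def ramseyColor (S : {S : Set ℕ // S.Infinite}) : κ :=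
  (exists_infinite_monochromatic_above_sInf χ S.2).choose

noncomputable def ramseyStep (S : {S : Set ℕ // S.Infinite}) : {S : Set ℕ // S.Infinite} :=
  ⟨{x ∈ S.1 | sInf S.1 < x ∧ χ (sInf S.1) x = ramseyColor χ S},
    (exists_infinite_monochromatic_above_sInf χ S.2).choose_spec⟩

noncomputable def ramseySets : ℕ → {S : Set ℕ // S.Infinite}
  | 0 => ⟨univ, infinite_univ⟩
  | n + 1 => ramseyStep χ (ramseySets n)

noncomputable def ramseyVertex (n : ℕ) : ℕ := sInf (ramseySets χ n).1

lemma ramseySets_antitone : Antitone fun n => (ramseySets χ n).1 :=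
  antitone_nat_of_succ_le fun _ _ hx => hx.1

lemma ramseyVertex_mem (n : ℕ) : ramseyVertex χ n ∈ (ramseySets χ n).1 :=
  Nat.sInf_mem (ramseySets χ n).2.nonempty

lemma ramseyVertex_lt_and_color_eq {i j : ℕ} (hij : i < j) :
    ramseyVertex χ i < ramseyVertex χ j ∧
      χ (ramseyVertex χ i) (ramseyVertex χ j) = ramseyColor χ (ramseySets χ i) :=
  (ramseySets_antitone χ hij (ramseyVertex_mem χ j)).2

theorem exists_monochromatic_triangle :
    ∃ a b c : ℕ, a < b ∧ b < c ∧ χ a b = χ b c ∧ χ a b = χ a c := by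
  obtain ⟨i, j, hij, hcolor⟩ := finite_univ.exists_lt_map_eq_of_forall_mem
    (f := fun n => ramseyColor χ (ramseySets χ n)) fun _ => mem_univ _
  obtain ⟨hab, hab_color⟩ := ramseyVertex_lt_and_color_eq χ hij
  obtain ⟨hbc, hbc_color⟩ := ramseyVertex_lt_and_color_eq χ j.lt_succ_self
  obtain ⟨-, hac_color⟩ := ramseyVertex_lt_and_color_eq χ (hij.trans j.lt_succ_self)
  exact ⟨_, _, _, hab, hbc, by rw [hab_color, hbc_color, hcolor], by rw [hab_color, hac_color]⟩

end InfiniteRamsey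

def factorialTower : ℕ → ℕ
  | 0 => 1
  | n + 1 => factorialTower n + (factorialTower n).factorial

lemma factorialTower_strictMono : StrictMono factorialTower :=
  strictMono_nat_of_lt_succ fun _ => Nat.lt_add_of_pos_right (Nat.factorial_pos _)

lemma factorialTower_sub_dvd_factorial {i j m : ℕ} (hij : i < j) (hjm : j ≤ m) :
    factorialTower j - factorialTower i ∣ (factorialTower m).factorial := by
  have hlt := factorialTower_strictMono hij
  have hle := factorialTower_strictMono.monotone hjm
  exact Nat.dvd_factorial (by omega) (by omega)

lemma factorialTower_sub_dvd_sub {i j k : ℕ} (hij : i < j) (hjk : j ≤ k) :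
    factorialTower j - factorialTower i ∣ factorialTower k - factorialTower j := by
  induction k, hjk using Nat.le_induction with
  | base => simp
  | succ k hjk ih =>
    have hle := factorialTower_strictMono.monotone hjk
    have hsucc : factorialTower (k + 1) - factorialTower j =
        (factorialTower k - factorialTower j) + (factorialTower k).factorial := by
      simp only [factorialTower]; omega
    rw [hsucc]
    exact dvd_add ih (factorialTower_sub_dvd_factorial hij hjk)

theorem stmt_2 (l : ℕ) (c : ℕ → Fin l) :
    ∃ x y z : ℕ, 0 < x ∧ 0 < y ∧ 0 < z ∧ x + y = z ∧ x ∣ y ∧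
      c x = c y ∧ c y = c z := by
  obtain ⟨i, j, k, hij, hjk, hxy, hxz⟩ :=
    exists_monochromatic_triangle fun i j => c (factorialTower j - factorialTower i)
  have hti := factorialTower_strictMono hij
  have htj := factorialTower_strictMono hjk
  refine ⟨factorialTower j - factorialTower i, factorialTower k - factorialTower j,
    factorialTower k - factorialTower i, by omega, by omega, by omega, by omega,
    factorialTower_sub_dvd_sub hij hjk.le, hxy, ?_⟩
  rw [← hxy, hxz]
end

section
/- For every positive integer l there exists a number S'(l) such that for every partition of {1, 2, ..., S'(l)} into l classes, there exist x, y, z ≤ S'(l) in the same class with x + y = z and x ∣ y. -/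
/-!
Let `v 0 = 0` and `v (n + 1) = v n + (v n)!`. For `i < j ≤ m` the difference `v j - v i` is
positive and at most `v m`, hence divides `(v m)! = v (m + 1) - v m`; summing these jumps,
`v j - v i ∣ v k - v j` whenever `i < j < k`. Colour the pair `i < j` by the class of
`v j - v i`. A monochromatic triangle `i < j < k` gives `x = v j - v i`, `y = v k - v j`,
`z = v k - v i` in one class with `x + y = z` and `x ∣ y`. Such a triangle exists among
`(l + 1) ^ (l + 2)` vertices by the greedy proof of the multicolour Ramsey theorem.
-/

open Finset Nat

def addFactorialSeq : ℕ → ℕ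
  | 0 => 0
  | n + 1 => addFactorialSeq n + (addFactorialSeq n)!

namespace addFactorialSeq

lemma strictMono : StrictMono addFactorialSeq :=
  strictMono_nat_of_lt_succ fun _ => Nat.lt_add_of_pos_right (factorial_pos _)

lemma sub_dvd_sub {i j k : ℕ} (hij : i < j) (hjk : j ≤ k) :
    addFactorialSeq j - addFactorialSeq i ∣ addFactorialSeq k - addFactorialSeq j := by
  induction k, hjk using Nat.le_induction with
  | base => simp
  | succ m hjm ih =>
    have hvij := strictMono hij
    have hvjm := strictMono.monotone hjm
    have hjump : addFactorialSeq j - addFactorialSeq i ∣ (addFactorialSeq m)! :=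
      dvd_factorial (by omega) (by omega)
    have hsplit : addFactorialSeq (m + 1) - addFactorialSeq j =
        (addFactorialSeq m - addFactorialSeq j) + (addFactorialSeq m)! := by
      simp only [addFactorialSeq]; omega
    rw [hsplit]
    exact dvd_add ih hjump

end addFactorialSeq

section Ramsey

variable {α : Type*} [Fintype α]

/-- `a 0` is the least element of `S`; the rest of the sequence is extracted from a colour class
of `x ↦ χ (a 0) x` on the remaining elements, which by pigeonhole keeps `(|α| + 1) ^ (m - 1)` of
them. -/
lemma exists_leftColored_increasing (χ : ℕ → ℕ → α) (m : ℕ) (S : Finset ℕ)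
    (hS : (Fintype.card α + 1) ^ m ≤ #S) :
    ∃ a : ℕ → ℕ, (∀ s < m, a s ∈ S) ∧ (∀ s t, s < t → t < m → a s < a t) ∧
      ∀ s t u, s < t → t < u → u < m → χ (a s) (a t) = χ (a s) (a u) := by
  classical
  induction m generalizing S with
  | zero => exact ⟨id, by omega, by omega, by omega⟩
  | succ m ih =>
    have : Nonempty α := ⟨χ 0 0⟩
    have hS0 : S.Nonempty := card_pos.mp (lt_of_lt_of_le (by positivity) hS)
    set a₀ := S.min' hS0
    have ha₀ : a₀ ∈ S := S.min'_mem hS0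
    have hrest : #(univ : Finset α) * (Fintype.card α + 1) ^ m ≤ #(S.erase a₀) := by
      have hpow : (Fintype.card α + 1) ^ (m + 1) =
          Fintype.card α * (Fintype.card α + 1) ^ m + (Fintype.card α + 1) ^ m := by ring
      have : 1 ≤ (Fintype.card α + 1) ^ m := one_le_pow _ _ (by omega)
      rw [Finset.card_univ, card_erase_of_mem ha₀]
      omega
    obtain ⟨q, -, hq⟩ := exists_le_card_fiber_of_mul_le_card_of_maps_to
      (f := χ a₀) (fun _ _ => mem_univ _) univ_nonempty hrest
    obtain ⟨b, hbT, hb_lt, hb⟩ := ih _ hq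
    have hbS : ∀ s < m, b s ∈ S.erase a₀ ∧ χ a₀ (b s) = q := fun s hs =>
      mem_filter.mp (hbT s hs)
    have ha₀b : ∀ s < m, a₀ < b s := fun s hs =>
      lt_of_le_of_ne (S.min'_le _ (mem_of_mem_erase (hbS s hs).1))
        (ne_of_mem_erase (hbS s hs).1).symm
    refine ⟨fun | 0 => a₀ | s + 1 => b s, ?_, ?_, ?_⟩
    · rintro (_ | s) hs
      exacts [ha₀, mem_of_mem_erase (hbS s (by omega)).1]
    · rintro (_ | s) (_ | t) hst ht <;> try omega
      · exact ha₀b t (by omega)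
      · exact hb_lt s t (by omega) (by omega)
    · rintro (_ | s) (_ | t) (_ | u) hst htu hu <;> try omega
      · rw [(hbS t (by omega)).2, (hbS u (by omega)).2]
      · exact hb s t u (by omega) (by omega) (by omega)

lemma exists_monochromatic_triangle_s3 (χ : ℕ → ℕ → α) :
    ∃ i j k, i < j ∧ j < k ∧ k < (Fintype.card α + 1) ^ (Fintype.card α + 2) ∧
      χ i j = χ j k ∧ χ i j = χ i k := by
  set n := Fintype.card α
  obtain ⟨a, haS, ha_lt, ha⟩ := exists_leftColored_increasing χ (n + 2)
    (range ((n + 1) ^ (n + 2))) (by rw [card_range])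
  have hcolor : ∀ s t, s < t → t ≤ n + 1 → χ (a s) (a t) = χ (a s) (a (s + 1)) :=
    fun s t hst ht => by
      rcases (show s + 1 ≤ t from hst).eq_or_lt with h | h
      · rw [← h]
      · exact (ha s (s + 1) t (by omega) h (by omega)).symm
  obtain ⟨s, t, hst, heq⟩ : ∃ s t : Fin (n + 1), s < t ∧
      χ (a s) (a (s + 1)) = χ (a t) (a (t + 1)) := by
    obtain ⟨s, t, hne, heq⟩ := Fintype.exists_ne_map_eq_of_card_lt
      (fun s : Fin (n + 1) => χ (a s) (a (s + 1))) (by simp [n])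
    rcases lt_or_gt_of_ne hne with h | h
    exacts [⟨s, t, h, heq⟩, ⟨t, s, h, heq.symm⟩]
  have hst' : (s : ℕ) < t := hst
  have ht : (t : ℕ) < n + 1 := t.isLt
  refine ⟨a s, a t, a (t + 1), ha_lt s t hst' (by omega), ha_lt t (t + 1) (by omega) (by omega),
    mem_range.mp (haS _ (by omega)), ?_, ?_⟩
  · rw [hcolor s t hst' (by omega), heq]
  · rw [hcolor s t hst' (by omega), hcolor s (t + 1) (by omega) (by omega)]

end Ramsey

theorem stmt_3_general (l : ℕ) :
    ∃ N : ℕ, 0 < N ∧ ∀ c : ℕ → Fin l,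
      ∃ x y z : ℕ, 0 < x ∧ x ≤ N ∧ 0 < y ∧ y ≤ N ∧ 0 < z ∧ z ≤ N ∧
        c x = c y ∧ c y = c z ∧ x + y = z ∧ x ∣ y := by
  set v := addFactorialSeq
  set R := (l + 1) ^ (l + 2)
  refine ⟨v R, addFactorialSeq.strictMono (pow_pos (succ_pos l) _), fun c => ?_⟩
  obtain ⟨i, j, k, hij, hjk, hkR, h₁, h₂⟩ := exists_monochromatic_triangle_s3 fun i j => c (v j - v i)
  simp only [Fintype.card_fin] at hkR
  have hvij : v i < v j := addFactorialSeq.strictMono hij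
  have hvjk : v j < v k := addFactorialSeq.strictMono hjk
  have hvkR : v k < v R := addFactorialSeq.strictMono hkR
  exact ⟨v j - v i, v k - v j, v k - v i, by omega, by omega, by omega, by omega, by omega,
    by omega, h₁, h₁.symm.trans h₂, by omega, addFactorialSeq.sub_dvd_sub hij hjk.le⟩

theorem stmt_3 (l : ℕ) (hl : 0 < l) :
    ∃ N : ℕ, 0 < N ∧ ∀ c : ℕ → Fin l,
      ∃ x y z : ℕ, 0 < x ∧ x ≤ N ∧ 0 < y ∧ y ≤ N ∧ 0 < z ∧ z ≤ N ∧
        c x = c y ∧ c y = c z ∧ x + y = z ∧ x ∣ y :=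
  stmt_3_general l
end

section
/- For every positive integer k there is a bound N(k) such that for every prime p > N(k), there exist consecutive integers r and r+1 with 0 < r < r+1 < p, both of which are k-th power residues modulo p (i.e., both are nonzero k-th powers in ℤ/pℤ). -/
/-!
Colour each `x ∈ {1, …, p - 1}` by its class in `(ZMod p)ˣ / ((ZMod p)ˣ)^k`. The unit group is
cyclic, so this quotient is cyclic of exponent dividing `k` and there are at most `k` colours.
Schur's theorem (from Ramsey's theorem for triangles) then gives `x + y = z ≤ N(k) < p` with
`x`, `y`, `z` of one colour, and `r = y / x`, `r + 1 = z / x` are both `k`-th powers.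
-/

open Finset

theorem exists_monochromatic_triangle_s5 (k : ℕ) :
    ∃ n : ℕ, ∀ {κ : Type*} (C : Finset κ) (f : ℕ → ℕ → κ) (S : Finset ℕ),
      #C ≤ k → n ≤ #S → (∀ a ∈ S, ∀ b ∈ S, a < b → f a b ∈ C) →
      ∃ a ∈ S, ∃ b ∈ S, ∃ c ∈ S, a < b ∧ b < c ∧ f a b = f b c ∧ f a b = f a c := by
  classical
  induction k with
  | zero =>
    refine ⟨2, fun C f S hC hS hf => ?_⟩
    have hS' : 1 < #S := by omega
    have := hf _ (S.min'_mem _) _ (S.max'_mem _) (S.min'_lt_max'_of_card hS')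
    simp_all
  | succ k ih =>
    obtain ⟨n, hn⟩ := ih
    refine ⟨(k + 1) * n + 2, fun C f S hC hS hf => ?_⟩
    have hSne : S.Nonempty := card_pos.mp (by omega)
    set v := S.min' hSne
    have hv_lt : ∀ u ∈ S.erase v, v < u := fun u hu =>
      lt_of_le_of_ne (S.min'_le u (mem_of_mem_erase hu)) (ne_of_mem_erase hu).symm
    -- pigeonhole on the colours of the edges at the least vertex `v`
    obtain ⟨i, hiC, hT⟩ : ∃ i ∈ C, n < #((S.erase v).filter (fun u => f v u = i)) := by
      refine exists_lt_card_fiber_of_mul_lt_card_of_maps_to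
        (fun u hu => hf v (S.min'_mem hSne) u (mem_of_mem_erase hu) (hv_lt u hu)) ?_
      rw [card_erase_of_mem (S.min'_mem hSne)]
      calc #C * n ≤ (k + 1) * n := Nat.mul_le_mul_right n hC
        _ < #S - 1 := by omega
    set T := (S.erase v).filter (fun u => f v u = i)
    have hTS : T ⊆ S := fun u hu => mem_of_mem_erase (mem_of_mem_filter u hu)
    by_cases hi : ∃ a ∈ T, ∃ b ∈ T, a < b ∧ f a b = i
    · obtain ⟨a, ha, b, hb, hab, hfab⟩ := hi
      rw [mem_filter] at ha hb
      exact ⟨v, S.min'_mem hSne, a, mem_of_mem_erase ha.1, b, mem_of_mem_erase hb.1,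
        hv_lt a ha.1, hab, by rw [ha.2, hfab], by rw [ha.2, hb.2]⟩
    · push Not at hi
      obtain ⟨a, ha, b, hb, c, hc, habc⟩ := hn (C.erase i) f T
        (by rw [card_erase_of_mem hiC]; omega) hT.le
        (fun a ha b hb hab => mem_erase.mpr ⟨hi a ha b hb hab, hf a (hTS ha) b (hTS hb) hab⟩)
      exact ⟨a, hTS ha, b, hTS hb, c, hTS hc, habc⟩

theorem exists_schur_triple (k : ℕ) :
    ∃ N : ℕ, ∀ {κ : Type*} [Finite κ], Nat.card κ ≤ k → ∀ c : ℕ → κ,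
      ∃ x y, 0 < x ∧ 0 < y ∧ x + y ≤ N ∧ c x = c y ∧ c x = c (x + y) := by
  obtain ⟨N, hN⟩ := exists_monochromatic_triangle_s5 k
  refine ⟨N, fun {κ} _ hκ c => ?_⟩
  have := Fintype.ofFinite κ
  -- colour the edge `a < b` by `c (b - a)`; a triangle `a < b < l` gives `(b - a) + (l - b) = l - a`
  obtain ⟨a, -, b, -, l, hl, hab, hbl, h₁, h₂⟩ :=
    hN (univ : Finset κ) (fun a b => c (b - a)) (range N)
      (by rwa [card_univ, ← Nat.card_eq_fintype_card]) (by simp) (fun _ _ _ _ _ => mem_univ _)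
  have hlN := mem_range.mp hl
  refine ⟨b - a, l - b, by omega, by omega, by omega, h₁, ?_⟩
  rwa [show b - a + (l - b) = l - a by omega]

theorem IsCyclic.card_quotient_powMonoidHom_range_dvd {G : Type*} [CommGroup G] [IsCyclic G]
    (k : ℕ) : Nat.card (G ⧸ (powMonoidHom k : G →* G).range) ∣ k := by
  have : IsCyclic (G ⧸ (powMonoidHom k : G →* G).range) :=
    isCyclic_of_surjective _ (QuotientGroup.mk'_surjective _)
  rw [← IsCyclic.exponent_eq_card]
  refine Monoid.exponent_dvd_of_forall_pow_eq_one fun q => ?_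
  induction q using QuotientGroup.induction_on with
  | H g => exact (QuotientGroup.eq_one_iff _).mpr ⟨g, rfl⟩

def powerClass (k : ℕ) {F : Type*} [Field F] [DecidableEq F] (a : F) :
    Fˣ ⧸ (powMonoidHom k : Fˣ →* Fˣ).range :=
  if h : a = 0 then 1 else Units.mk0 a h

theorem exists_pow_eq_div_of_powerClass_eq {k : ℕ} {F : Type*} [Field F] [DecidableEq F] {a b : F}
    (ha : a ≠ 0) (hb : b ≠ 0) (h : powerClass k a = powerClass k b) :
    ∃ s : F, s ≠ 0 ∧ s ^ k = b / a := by
  rw [powerClass, powerClass, dif_neg ha, dif_neg hb, QuotientGroup.eq] at h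
  obtain ⟨s, hs⟩ := h
  refine ⟨s, s.ne_zero, ?_⟩
  have := congrArg Units.val hs
  simpa [div_eq_inv_mul] using this

theorem ZMod.val_add_one_lt {n : ℕ} [NeZero n] {a : ZMod n} (h : a + 1 ≠ 0) :
    a.val + 1 < n := by
  refine lt_of_le_of_ne (ZMod.val_lt a) fun hn => h ?_
  have h0 : ((a.val + 1 : ℕ) : ZMod n) = 0 := by rw [hn, ZMod.natCast_self]
  rwa [Nat.cast_succ, ZMod.natCast_zmod_val] at h0

theorem stmt_5 (k : ℕ) (hk : 0 < k) :
    ∃ N : ℕ, ∀ p : ℕ, p.Prime → p > N →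
      ∃ r : ℕ, 0 < r ∧ r + 1 < p ∧
        (∃ s : ZMod p, s ≠ 0 ∧ s ^ k = (r : ZMod p)) ∧
        (∃ s : ZMod p, s ≠ 0 ∧ s ^ k = ((r + 1 : ℕ) : ZMod p)) := by
  obtain ⟨N, hN⟩ := exists_schur_triple k
  refine ⟨N, fun p hp hpN => ?_⟩
  have := Fact.mk hp
  have hcard : Nat.card ((ZMod p)ˣ ⧸ (powMonoidHom k : (ZMod p)ˣ →* (ZMod p)ˣ).range) ≤ k :=
    Nat.le_of_dvd hk (IsCyclic.card_quotient_powMonoidHom_range_dvd k)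
  obtain ⟨x, y, hx, hy, hxy, hcxy, hcxz⟩ := hN hcard fun n => powerClass k (n : ZMod p)
  have hne : ∀ n, 0 < n → n ≤ N → (n : ZMod p) ≠ 0 := fun n hn hnN h =>
    absurd (Nat.le_of_dvd hn ((ZMod.natCast_eq_zero_iff n p).mp h)) (by omega)
  have hx0 := hne x hx (by omega)
  obtain ⟨s, hs0, hs⟩ := exists_pow_eq_div_of_powerClass_eq hx0 (hne y hy (by omega)) hcxy
  obtain ⟨t, ht0, ht⟩ := exists_pow_eq_div_of_powerClass_eq hx0 (hne _ (by omega) hxy) hcxz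
  have hsucc : ((x + y : ℕ) : ZMod p) / x = (y : ZMod p) / x + 1 := by
    rw [Nat.cast_add, add_div, div_self hx0, add_comm]
  have hr1 : (y : ZMod p) / x + 1 ≠ 0 := hsucc ▸ div_ne_zero (hne _ (by omega) hxy) hx0
  refine ⟨((y : ZMod p) / x).val, ZMod.val_pos.mpr (hs ▸ pow_ne_zero k hs0),
    ZMod.val_add_one_lt hr1, ⟨s, hs0, by rw [hs, ZMod.natCast_zmod_val]⟩, ⟨t, ht0, ?_⟩⟩
  rw [ht, hsucc, Nat.cast_succ, ZMod.natCast_zmod_val]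
end

section
/- Let S(l) denote the finite Schur number for l colors (so every l-coloring of {1,...,S(l)} admits a monochromatic solution of x + y = z). If p > S(l) is a prime and H is a subgroup of (ℤ/pℤ)* of index at most l, then there exists an element h ∈ H with h + 1 ∈ H. -/
/-!
Colour `n ∈ {1, …, S}` by the coset of `n` in `(ZMod p)ˣ ⧸ H`; since `p > S` these residues are
units, and there are at most `l` cosets. Schur's theorem gives `x + y = z` with `x, y, z` in one
coset, so `y / x` and `z / x = y / x + 1` both lie in `H`.
-/

open Function

section Schur

variable {α β : Type*}

def HasMonochromaticSchurTriple (S : ℕ) (c : ℕ → α) : Prop :=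
  ∃ x y z : ℕ, 0 < x ∧ x ≤ S ∧ 0 < y ∧ y ≤ S ∧ 0 < z ∧ z ≤ S ∧
    c x = c y ∧ c y = c z ∧ x + y = z

theorem HasMonochromaticSchurTriple.of_comp {S : ℕ} {c : ℕ → α} {f : α → β} (hf : Injective f)
    (h : HasMonochromaticSchurTriple S (f ∘ c)) : HasMonochromaticSchurTriple S c := by
  obtain ⟨x, y, z, hx, hxS, hy, hyS, hz, hzS, hxy, hyz, hsum⟩ := h
  exact ⟨x, y, z, hx, hxS, hy, hyS, hz, hzS, hf hxy, hf hyz, hsum⟩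

theorem hasMonochromaticSchurTriple_of_card_le {l S : ℕ}
    (hS : ∀ c : ℕ → Fin l, HasMonochromaticSchurTriple S c) [Finite α] (hα : Nat.card α ≤ l)
    (c : ℕ → α) : HasMonochromaticSchurTriple S c :=
  let e : α ↪ Fin l := (Finite.equivFin α).toEmbedding.trans (Fin.castLEEmb hα)
  (hS (e ∘ c)).of_comp e.injective

end Schur

section UnitCoset

variable {K : Type*} [DivisionRing K]

open Classical in
/-- Takes the junk value `H` at `x = 0`. -/
noncomputable def unitCoset (H : Subgroup Kˣ) (x : K) : Kˣ ⧸ H :=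
  if hx : x = 0 then QuotientGroup.mk 1 else QuotientGroup.mk (Units.mk0 x hx)

theorem unitCoset_of_ne_zero (H : Subgroup Kˣ) {x : K} (hx : x ≠ 0) :
    unitCoset H x = QuotientGroup.mk (Units.mk0 x hx) :=
  dif_neg hx

theorem exists_mem_add_one_mem_of_unitCoset_eq {H : Subgroup Kˣ} {x y z : K}
    (hx : x ≠ 0) (hy : y ≠ 0) (hz : z ≠ 0)
    (hxy : unitCoset H x = unitCoset H y) (hyz : unitCoset H y = unitCoset H z)
    (hsum : x + y = z) : ∃ h ∈ H, ∃ h' ∈ H, (h' : K) = h + 1 := by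
  have hxz := hxy.trans hyz
  rw [unitCoset_of_ne_zero H hx, unitCoset_of_ne_zero H hy] at hxy
  rw [unitCoset_of_ne_zero H hx, unitCoset_of_ne_zero H hz] at hxz
  refine ⟨_, QuotientGroup.eq.mp hxy, _, QuotientGroup.eq.mp hxz, ?_⟩
  simp only [Units.val_mul, Units.val_inv_eq_inv_val, Units.val_mk0]
  rw [← hsum, mul_add, inv_mul_cancel₀ hx, add_comm]

end UnitCoset

theorem natCast_ne_zero_of_pos_of_lt {p n : ℕ} (hn : 0 < n) (hnp : n < p) : (n : ZMod p) ≠ 0 :=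
  fun h => absurd (Nat.le_of_dvd hn ((ZMod.natCast_eq_zero_iff n p).mp h)) (not_le.mpr hnp)

theorem stmt_6 (l S : ℕ)
    (hS : ∀ c : ℕ → Fin l, ∃ x y z : ℕ,
      0 < x ∧ x ≤ S ∧ 0 < y ∧ y ≤ S ∧ 0 < z ∧ z ≤ S ∧
      c x = c y ∧ c y = c z ∧ x + y = z)
    (p : ℕ) (hp : p.Prime) (hpS : p > S)
    (H : Subgroup (ZMod p)ˣ) (hidx : H.index ≤ l) :
    ∃ h ∈ H, ∃ h' ∈ H, ((h' : (ZMod p)ˣ) : ZMod p) = ((h : (ZMod p)ˣ) : ZMod p) + 1 := by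
  have : Fact p.Prime := ⟨hp⟩
  obtain ⟨x, y, z, hx, hxS, hy, hyS, hz, hzS, hxy, hyz, hsum⟩ :=
    hasMonochromaticSchurTriple_of_card_le hS hidx fun n => unitCoset H (n : ZMod p)
  have hcast : ∀ {n : ℕ}, 0 < n → n ≤ S → (n : ZMod p) ≠ 0 := fun hn hnS =>
    natCast_ne_zero_of_pos_of_lt hn (lt_of_le_of_lt hnS hpS)
  exact exists_mem_add_one_mem_of_unitCoset_eq (hcast hx hxS) (hcast hy hyS) (hcast hz hzS)
    hxy hyz (by rw [← hsum, Nat.cast_add])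
end

section
/- Fix a positive integer k. There exists a constant C(k), independent of p, such that for every prime p > C(k) there is an integer r with 0 < r < r+1 ≤ C(k) such that both r and r+1 are k-th power residues modulo p. -/
/-!
Colour each `n < p` by its class in `(ZMod p)ˣ` modulo `k`-th powers; there are at most `k`
colours. If `x`, `x * m` and `x * (m + 1)` have the same colour, then `m` and `m + 1` lie in the
trivial class, i.e. are `k`-th power residues. Such a monochromatic triple exists below a bound
depending only on `k`: colour the edge `i < j` of a complete graph by the colour of `a j - a i`,
where `a (t + 1) = a t + (a t)!`, so that `a j - a i ∣ a l - a j` for `i < j < l`, and take a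
monochromatic triangle given by Ramsey's theorem.
-/

open Finset
open scoped Nat

def triangleRamseyBound : ℕ → ℕ
  | 0 => 2
  | m + 1 => (m + 1) * triangleRamseyBound m + 2

theorem exists_monochromatic_triangle_s7 {κ : Type*} [DecidableEq κ] (c : ℕ → ℕ → κ)
    (m : ℕ) (T : Finset κ) (hT : #T ≤ m) (S : Finset ℕ) (hS : triangleRamseyBound m ≤ #S)
    (hc : ∀ i ∈ S, ∀ j ∈ S, i < j → c i j ∈ T) :
    ∃ i ∈ S, ∃ j ∈ S, ∃ l ∈ S, i < j ∧ j < l ∧ c j l = c i j ∧ c i l = c i j := by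
  induction m generalizing T S with
  | zero =>
    have hT : T = ∅ := card_eq_zero.1 (by omega)
    obtain ⟨i, hi, j, hj, hij⟩ :=
      one_lt_card.1 (show 1 < #S by simp only [triangleRamseyBound] at hS; omega)
    rcases lt_or_gt_of_ne hij with h | h
    · simpa [hT] using hc i hi j hj h
    · simpa [hT] using hc j hj i hi h
  | succ m ih =>
    have hS_ne : S.Nonempty := card_pos.1 (by simp only [triangleRamseyBound] at hS; omega)
    set v := S.min' hS_ne
    have hv_lt : ∀ w ∈ S.erase v, v < w := fun w hw => min'_lt_of_mem_erase_min' S hS_ne hw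
    have hv_maps : ∀ w ∈ S.erase v, c v w ∈ T :=
      fun w hw => hc v (min'_mem S hS_ne) w (mem_of_mem_erase hw) (hv_lt w hw)
    obtain ⟨t, htT, hF⟩ := exists_lt_card_fiber_of_mul_lt_card_of_maps_to hv_maps
      (n := triangleRamseyBound m) (by
        rw [card_erase_of_mem (min'_mem S hS_ne)]
        simp only [triangleRamseyBound] at hS
        have := Nat.mul_le_mul_right (triangleRamseyBound m) hT
        omega)
    set F := {w ∈ S.erase v | c v w = t}
    have hF_sub : F ⊆ S := (filter_subset _ _).trans (erase_subset _ _)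
    by_cases hF_t : ∃ i ∈ F, ∃ j ∈ F, i < j ∧ c i j = t
    · obtain ⟨i, hi, j, hj, hij, hcij⟩ := hF_t
      rw [mem_filter] at hi hj
      exact ⟨v, min'_mem S hS_ne, i, mem_of_mem_erase hi.1, j, mem_of_mem_erase hj.1,
        hv_lt i hi.1, hij, by rw [hcij, hi.2], by rw [hi.2, hj.2]⟩
    · push Not at hF_t
      obtain ⟨i, hi, j, hj, l, hl, hij, hjl, h⟩ := ih (T.erase t)
        (by rw [card_erase_of_mem htT]; omega) F hF.le
        fun i hi j hj hij => mem_erase.2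
          ⟨hF_t i hi j hj hij, hc i (hF_sub hi) j (hF_sub hj) hij⟩
      exact ⟨i, hF_sub hi, j, hF_sub hj, l, hF_sub hl, hij, hjl, h⟩

def factorialSeq : ℕ → ℕ
  | 0 => 1
  | t + 1 => factorialSeq t + (factorialSeq t)!

theorem factorialSeq_strictMono : StrictMono factorialSeq :=
  strictMono_nat_of_lt_succ fun _ => Nat.lt_add_of_pos_right (Nat.factorial_pos _)

theorem factorialSeq_sub_dvd_sub {i j l : ℕ} (hij : i < j) (hjl : j ≤ l) :
    factorialSeq j - factorialSeq i ∣ factorialSeq l - factorialSeq j := by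
  have hlt : factorialSeq i < factorialSeq j := factorialSeq_strictMono hij
  induction l, hjl using Nat.le_induction with
  | base => simp
  | succ l hjl ih =>
    have hle : factorialSeq j ≤ factorialSeq l := factorialSeq_strictMono.monotone hjl
    have hstep : factorialSeq (l + 1) - factorialSeq j
        = factorialSeq l - factorialSeq j + (factorialSeq l)! := by
      simp only [factorialSeq]; omega
    rw [hstep]
    exact dvd_add ih (Nat.dvd_factorial (by omega) (by omega))

theorem exists_monochromatic_divisibility_schur_triple (k : ℕ) :
    ∃ N, ∀ {κ : Type*} [Finite κ], Nat.card κ ≤ k → ∀ c : ℕ → κ,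
      ∃ x m, 0 < x ∧ 0 < m ∧ x * (m + 1) ≤ N ∧
        c (x * m) = c x ∧ c (x * (m + 1)) = c x := by
  refine ⟨factorialSeq (triangleRamseyBound k), fun {κ} _ hκ c => ?_⟩
  classical
  have := Fintype.ofFinite κ
  obtain ⟨i, -, j, -, l, hl, hij, hjl, hjl_col, hil_col⟩ :=
    exists_monochromatic_triangle_s7 (fun i j => c (factorialSeq j - factorialSeq i)) k univ
      (by rwa [Finset.card_univ, ← Nat.card_eq_fintype_card]) (range (triangleRamseyBound k))
      (by rw [card_range]) (fun _ _ _ _ _ => mem_univ _)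
  obtain ⟨m, hm⟩ := factorialSeq_sub_dvd_sub hij hjl.le
  have hai := factorialSeq_strictMono hij
  have haj := factorialSeq_strictMono hjl
  have hal : factorialSeq l ≤ factorialSeq (triangleRamseyBound k) :=
    factorialSeq_strictMono.monotone (mem_range.1 hl).le
  have hil : factorialSeq l - factorialSeq i = (factorialSeq j - factorialSeq i) * (m + 1) := by
    rw [mul_add_one, ← hm]; omega
  refine ⟨factorialSeq j - factorialSeq i, m, by omega, Nat.pos_of_ne_zero ?_, by omega, ?_, ?_⟩
  · rintro rfl
    omega
  · rw [← hm]; exact hjl_col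
  · rw [← hil]; exact hil_col

section PowerResidue

variable {G₀ : Type*} [CommGroupWithZero G₀]

open scoped Classical in
noncomputable def powerResidueClass (k : ℕ) (a : G₀) :
    G₀ˣ ⧸ (powMonoidHom k : G₀ˣ →* G₀ˣ).range :=
  if h : a = 0 then 1 else QuotientGroup.mk (Units.mk0 a h)

theorem exists_pow_eq_of_powerResidueClass_mul_eq {k : ℕ} {a b : G₀} (ha : a ≠ 0)
    (hb : b ≠ 0) (h : powerResidueClass k (a * b) = powerResidueClass k a) :
    ∃ s : G₀, s ≠ 0 ∧ s ^ k = b := by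
  rw [powerResidueClass, powerResidueClass, dif_neg (mul_ne_zero ha hb), dif_neg ha,
    QuotientGroup.eq_iff_div_mem] at h
  obtain ⟨s, hs⟩ : Units.mk0 b hb ∈ (powMonoidHom k).range := by
    convert h using 1
    ext
    simp
  exact ⟨s, s.ne_zero, congrArg Units.val hs⟩

end PowerResidue

theorem card_quotient_range_powMonoidHom_le (F : Type*) [Field F] [Finite F] {k : ℕ}
    (hk : 0 < k) : Nat.card (Fˣ ⧸ (powMonoidHom k : Fˣ →* Fˣ).range) ≤ k := by
  rw [← Subgroup.index, IsCyclic.index_powMonoidHom_range]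
  exact Nat.gcd_le_right _ hk

theorem stmt_7 (k : ℕ) (hk : 0 < k) :
    ∃ C : ℕ, ∀ p : ℕ, p.Prime → p > C →
      ∃ r : ℕ, 0 < r ∧ r + 1 ≤ C ∧
        (∃ s : ZMod p, s ≠ 0 ∧ s ^ k = (r : ZMod p)) ∧
        (∃ s : ZMod p, s ≠ 0 ∧ s ^ k = ((r + 1 : ℕ) : ZMod p)) := by
  obtain ⟨N, hN⟩ := exists_monochromatic_divisibility_schur_triple k
  refine ⟨N, fun p hp hpN => ?_⟩
  have := Fact.mk hp
  have cast_ne_zero {n : ℕ} (hn : 0 < n) (hnN : n ≤ N) : (n : ZMod p) ≠ 0 := by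
    rw [Ne, ZMod.natCast_eq_zero_iff]
    exact fun h => by have := Nat.le_of_dvd hn h; omega
  obtain ⟨x, m, hx, hm, hxmN, hcm, hcm1⟩ := hN (card_quotient_range_powMonoidHom_le (ZMod p) hk)
    fun n : ℕ => powerResidueClass k (n : ZMod p)
  have hm1N : m + 1 ≤ N := le_trans (Nat.le_mul_of_pos_left _ hx) hxmN
  have hxN : x ≤ N := le_trans (Nat.le_mul_of_pos_right _ (Nat.succ_pos m)) hxmN
  simp only [Nat.cast_mul] at hcm hcm1
  have hx0 := cast_ne_zero hx hxN
  exact ⟨m, hm, hm1N,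
    exists_pow_eq_of_powerResidueClass_mul_eq hx0 (cast_ne_zero hm (by omega)) hcm,
    exists_pow_eq_of_powerResidueClass_mul_eq hx0 (cast_ne_zero (Nat.succ_pos m) hm1N) hcm1⟩
end

section
/- For every coloring c : ℤ⁺ → Fin l, there exist positive integers a and b with a ∣ b such that c(a) = c(b) = c(a + b). -/
/-!
Colour the pair `m < n` by `c (x n - x m)`, where `x (k + 1) = x k + (x k)!`. Infinite Ramsey for
triangles yields `i < j < k` with `c (x j - x i) = c (x k - x j) = c (x k - x i)`, and
`a = x j - x i`, `b = x k - x j` work: `a + b = x k - x i`, and `a ∣ b` because every step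
`x (m + 1) - x m = (x m)!` with `m ≥ j` is divisible by each `d ≤ x j`.
-/

theorem Set.Infinite.exists_infinite_fiber_s11 {α β : Type*} {s : Set α} {t : Set β} {g : α → β}
    (hs : s.Infinite) (ht : t.Finite) (hg : Set.MapsTo g s t) :
    ∃ y ∈ t, {a | a ∈ s ∧ g a = y}.Infinite := by
  by_contra! hfin
  exact hs ((ht.biUnion hfin).subset fun a ha => Set.mem_biUnion (hg ha) ⟨ha, rfl⟩)

theorem exists_monochromatic_triangle_s11 {α : Type*} [DecidableEq α] (C : Finset α)
    (f : ℕ → ℕ → α) (hf : ∀ i j, i < j → f i j ∈ C) :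
    ∃ i j k, i < j ∧ j < k ∧ f i j = f j k ∧ f i k = f j k := by
  induction C using Finset.strongInduction generalizing f with
  | H C ih =>
  obtain ⟨x, hxC, hinf⟩ :=
    (Set.Ioi_infinite 0).exists_infinite_fiber_s11 C.finite_toSet fun n hn => hf 0 n hn
  set g := Nat.nth (· ∈ {n | n ∈ Set.Ioi 0 ∧ f 0 n = x})
  have hg_mono : StrictMono g := Nat.nth_strictMono hinf
  have hg_mem : ∀ m, 0 < g m ∧ f 0 (g m) = x := Nat.nth_mem_of_infinite hinf
  by_cases hx : ∃ m n, m < n ∧ f (g m) (g n) = x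
  · obtain ⟨m, n, hmn, hcol⟩ := hx
    exact ⟨0, g m, g n, (hg_mem m).1, hg_mono hmn, by rw [(hg_mem m).2, hcol],
      by rw [(hg_mem n).2, hcol]⟩
  · push Not at hx
    obtain ⟨i, j, k, hij, hjk, h₁, h₂⟩ := ih (C.erase x) (Finset.erase_ssubset hxC)
      (fun m n => f (g m) (g n))
      fun m n hmn => Finset.mem_erase.2 ⟨hx m n hmn, hf _ _ (hg_mono hmn)⟩
    exact ⟨g i, g j, g k, hg_mono hij, hg_mono hjk, h₁, h₂⟩

def factorialChain : ℕ → ℕ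
  | 0 => 1
  | k + 1 => factorialChain k + (factorialChain k).factorial

theorem factorialChain_strictMono : StrictMono factorialChain :=
  strictMono_nat_of_lt_succ fun _ => Nat.lt_add_of_pos_right (Nat.factorial_pos _)

theorem factorialChain_modEq {d j k : ℕ} (hd : 0 < d) (hdj : d ≤ factorialChain j)
    (hjk : j ≤ k) : factorialChain k ≡ factorialChain j [MOD d] := by
  induction k, hjk using Nat.le_induction with
  | base => rfl
  | succ k hjk ih =>
    have hdk : d ∣ (factorialChain k).factorial :=
      Nat.dvd_factorial hd (hdj.trans (factorialChain_strictMono.monotone hjk))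
    exact ((Nat.modEq_zero_iff_dvd.2 hdk).add_left (factorialChain k)).trans ih

theorem factorialChain_sub_dvd_sub {i j k : ℕ} (hij : i < j) (hjk : j ≤ k) :
    factorialChain j - factorialChain i ∣ factorialChain k - factorialChain j :=
  (Nat.modEq_iff_dvd' (factorialChain_strictMono.monotone hjk)).1
    (factorialChain_modEq (Nat.sub_pos_of_lt (factorialChain_strictMono hij))
      (Nat.sub_le _ _) hjk).symm

theorem stmt_11 (l : ℕ) (c : ℕ → Fin l) :
    ∃ a b : ℕ, 0 < a ∧ 0 < b ∧ a ∣ b ∧ c a = c b ∧ c b = c (a + b) := by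
  obtain ⟨i, j, k, hij, hjk, h₁, h₂⟩ := exists_monochromatic_triangle_s11 Finset.univ
    (fun m n => c (factorialChain n - factorialChain m)) fun _ _ _ => Finset.mem_univ _
  have hij' := factorialChain_strictMono hij
  have hjk' := factorialChain_strictMono hjk
  refine ⟨factorialChain j - factorialChain i, factorialChain k - factorialChain j,
    by omega, by omega, factorialChain_sub_dvd_sub hij hjk.le, h₁, ?_⟩
  rwa [show factorialChain j - factorialChain i + (factorialChain k - factorialChain j) =
    factorialChain k - factorialChain i by omega, eq_comm]
end

section
/- For every coloring c : ℤ⁺ → Fin l there exists a positive integer d and a positive integer q such that the three numbers d, dq, and d(q+1) all receive the same color under c. -/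
/-!
By Hindman's theorem some colour class contains all finite sums of a sequence `b` of positive
integers. Among the partial sums of `b₁, b₂, …` two agree modulo `b₀`, so a block `y` of
consecutive later terms is divisible by `b₀`; then `b₀`, `y` and `b₀ + y` are finite sums of `b`,
hence have the same colour.
-/

namespace Hindman

theorem zero_mem_FS_of_finite {G : Type*} [AddCommGroup G] [Finite G] (a : Stream' G) :
    0 ∈ FS a := by
  obtain ⟨i, j, hne, heq⟩ :=
    Finite.exists_ne_map_eq_of_infinite fun n => ∑ k ∈ Finset.range n, a.get k
  wlog hij : i < j generalizing i j
  · exact this j i hne.symm heq.symm (by omega)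
  have := FS.finsetSum a (Finset.Ico i j) (Finset.nonempty_Ico.2 hij)
  rwa [Finset.sum_Ico_eq_sub _ hij.le, ← heq, sub_self] at this

theorem exists_mem_FS_of_mem_FS_map {M N : Type*} [AddSemigroup M] [AddSemigroup N]
    (f : AddHom M N) {a : Stream' M} {n : N} (hn : n ∈ FS (a.map f)) :
    ∃ m ∈ FS a, f m = n := by
  generalize hb : a.map f = b at hn
  induction hn generalizing a with
  | head' b =>
    subst hb
    exact ⟨a.head, FS.head a, rfl⟩
  | tail' b n _ ih =>
    obtain ⟨m, hm, rfl⟩ := ih (a := a.tail) (by rw [← hb, Stream'.tail_map])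
    exact ⟨m, FS.tail a m hm, rfl⟩
  | cons' b n _ ih =>
    obtain ⟨m, hm, rfl⟩ := ih (a := a.tail) (by rw [← hb, Stream'.tail_map])
    exact ⟨a.head + m, FS.cons a m hm, by rw [map_add, ← hb, Stream'.head_map]⟩

theorem exists_dvd_mem_FS (a : Stream' ℕ+) (d : ℕ+) : ∃ y ∈ FS a, d ∣ y := by
  let f : AddHom ℕ+ (ZMod d) := ⟨fun n => ((n : ℕ) : ZMod d), by simp⟩
  obtain ⟨y, hy, hfy⟩ := exists_mem_FS_of_mem_FS_map f (zero_mem_FS_of_finite (a.map f))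
  exact ⟨y, hy, PNat.dvd_iff.2 ((ZMod.natCast_eq_zero_iff _ _).1 hfy)⟩

end Hindman

open Hindman in
theorem exists_monochromatic_schur_triple_dvd {κ : Type*} [Finite κ] (c : ℕ+ → κ) :
    ∃ x y : ℕ+, x ∣ y ∧ c x = c y ∧ c y = c (x + y) := by
  obtain ⟨_, ⟨t, rfl⟩, b, hb⟩ :=
    exists_FS_of_finite_cover (Set.range fun t => c ⁻¹' {t}) (Set.finite_range _)
      fun n _ => Set.mem_sUnion.2 ⟨_, ⟨c n, rfl⟩, rfl⟩
  obtain ⟨y, hy, hdvd⟩ := exists_dvd_mem_FS b.tail b.head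
  have hx : c b.head = t := hb (FS.head b)
  have hy' : c y = t := hb (FS.tail b y hy)
  have hxy : c (b.head + y) = t := hb (FS.cons b y hy)
  exact ⟨b.head, y, hdvd, hx.trans hy'.symm, hy'.trans hxy.symm⟩

theorem stmt_12 (l : ℕ) (c : ℕ → Fin l) :
    ∃ d q : ℕ, 0 < d ∧ 0 < q ∧ c d = c (d * q) ∧ c (d * q) = c (d * (q + 1)) := by
  obtain ⟨d, _, ⟨q, rfl⟩, hdq, hdq'⟩ := exists_monochromatic_schur_triple_dvd fun n : ℕ+ => c n
  refine ⟨d, q, d.pos, q.pos, by simpa using hdq, ?_⟩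
  simpa [mul_add, add_comm] using hdq'
end

section
/- For every positive integer k there exists a constant c₀(k) such that for every completely multiplicative function f : ℤ⁺ → {−1, 1}, there is a positive integer a ≤ c₀(k) with f(a) = f(a+1) = 1. -/
/-! Since `f` takes values `±1`, `f (m * n) = 1` whenever `f m = f n`; in particular `f` is `1` on
squares. Going through `f 2`, `f 3`, `f 5` one of the pairs `(1, 2)`, `(3, 4)`, `(4, 5)`, `(9, 10)`
has both values `1`, so `c₀ = 9` works. -/

section SignMultiplicative

variable {f : ℕ → ℤ} (hmul : ∀ m n : ℕ, 0 < m → 0 < n → f (m * n) = f m * f n)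
  (hpm : ∀ n : ℕ, 0 < n → f n = 1 ∨ f n = -1)
include hmul hpm

theorem apply_mul_eq_one_of_apply_eq {m n : ℕ} (hm : 0 < m) (hn : 0 < n) (h : f m = f n) :
    f (m * n) = 1 := by
  rw [hmul m n hm hn, h]
  rcases hpm n hn with h' | h' <;> rw [h'] <;> norm_num

theorem apply_mul_self_eq_one {n : ℕ} (hn : 0 < n) : f (n * n) = 1 :=
  apply_mul_eq_one_of_apply_eq hmul hpm hn hn rfl

end SignMultiplicative

theorem stmt_14_general :
    ∃ c₀ : ℕ, ∀ f : ℕ → ℤ,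
      (∀ m n : ℕ, 0 < m → 0 < n → f (m * n) = f m * f n) →
      (∀ n : ℕ, 0 < n → f n = 1 ∨ f n = -1) →
      ∃ a : ℕ, 0 < a ∧ a ≤ c₀ ∧ f a = 1 ∧ f (a + 1) = 1 := by
  refine ⟨9, fun f hmul hpm => ?_⟩
  have h1 : f 1 = 1 := apply_mul_self_eq_one hmul hpm one_pos
  have h4 : f 4 = 1 := apply_mul_self_eq_one (n := 2) hmul hpm two_pos
  have h9 : f 9 = 1 := apply_mul_self_eq_one (n := 3) hmul hpm three_pos
  rcases hpm 2 two_pos with h2 | h2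
  · exact ⟨1, by norm_num, by norm_num, h1, h2⟩
  rcases hpm 3 three_pos with h3 | h3
  · exact ⟨3, by norm_num, by norm_num, h3, h4⟩
  rcases hpm 5 (by norm_num) with h5 | h5
  · exact ⟨4, by norm_num, by norm_num, h4, h5⟩
  have h10 : f 10 = 1 :=
    apply_mul_eq_one_of_apply_eq (m := 2) (n := 5) hmul hpm two_pos (by norm_num) (h2.trans h5.symm)
  exact ⟨9, by norm_num, le_rfl, h9, h10⟩

theorem stmt_14 (k : ℕ) (hk : 0 < k) :
    ∃ c₀ : ℕ, ∀ f : ℕ → ℤ,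
      (∀ m n : ℕ, 0 < m → 0 < n → f (m * n) = f m * f n) →
      (∀ n : ℕ, 0 < n → f n = 1 ∨ f n = -1) →
      ∃ a : ℕ, 0 < a ∧ a ≤ c₀ ∧ f a = 1 ∧ f (a + 1) = 1 :=
  stmt_14_general
end

section
/- Let N = R₃(l) be the l-color Ramsey number for triangles and let (a_n) be a sequence of positive integers such that for all i < j < k ≤ N, ∑_{m=i}^{j-1} a_m divides ∑_{m=j}^{k-1} a_m. Then for every coloring c of the positive integers with l colors, there exist indices i < j < k ≤ N such that the three partial sums x = ∑_{m=i}^{j-1} a_m, y = ∑_{m=j}^{k-1} a_m, z = ∑_{m=i}^{k-1} a_m all have the same color, satisfy x + y = z, and x ∣ y. -/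
theorem stmt_16_general (l N : ℕ)
    (hRamsey : ∀ ec : ℕ → ℕ → Fin l, ∃ i j k : ℕ,
      1 ≤ i ∧ i < j ∧ j < k ∧ k ≤ N ∧ ec i j = ec i k ∧ ec i j = ec j k)
    (a : ℕ → ℕ)
    (hdvd : ∀ i j k : ℕ, 1 ≤ i → i < j → j < k → k ≤ N →
      (∑ m ∈ Finset.Ico i j, a m) ∣ (∑ m ∈ Finset.Ico j k, a m))
    (c : ℕ → Fin l) :
    ∃ i j k : ℕ, 1 ≤ i ∧ i < j ∧ j < k ∧ k ≤ N ∧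
      c (∑ m ∈ Finset.Ico i j, a m) = c (∑ m ∈ Finset.Ico j k, a m) ∧
      c (∑ m ∈ Finset.Ico j k, a m) = c (∑ m ∈ Finset.Ico i k, a m) ∧
      (∑ m ∈ Finset.Ico i j, a m) + (∑ m ∈ Finset.Ico j k, a m)
        = (∑ m ∈ Finset.Ico i k, a m) ∧
      (∑ m ∈ Finset.Ico i j, a m) ∣ (∑ m ∈ Finset.Ico j k, a m) := by
  obtain ⟨i, j, k, hi, hij, hjk, hkN, hij_ik, hij_jk⟩ :=
    hRamsey fun i j => c (∑ m ∈ Finset.Ico i j, a m)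
  exact ⟨i, j, k, hi, hij, hjk, hkN, hij_jk, hij_jk ▸ hij_ik,
    Finset.sum_Ico_consecutive a hij.le hjk.le, hdvd i j k hi hij hjk hkN⟩

theorem stmt_16 (l N : ℕ)
    (hRamsey : ∀ ec : ℕ → ℕ → Fin l, ∃ i j k : ℕ,
      1 ≤ i ∧ i < j ∧ j < k ∧ k ≤ N ∧ ec i j = ec i k ∧ ec i j = ec j k)
    (a : ℕ → ℕ) (ha : ∀ n, 0 < a n)
    (hdvd : ∀ i j k : ℕ, 1 ≤ i → i < j → j < k → k ≤ N →
      (∑ m ∈ Finset.Ico i j, a m) ∣ (∑ m ∈ Finset.Ico j k, a m))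
    (c : ℕ → Fin l) :
    ∃ i j k : ℕ, 1 ≤ i ∧ i < j ∧ j < k ∧ k ≤ N ∧
      c (∑ m ∈ Finset.Ico i j, a m) = c (∑ m ∈ Finset.Ico j k, a m) ∧
      c (∑ m ∈ Finset.Ico j k, a m) = c (∑ m ∈ Finset.Ico i k, a m) ∧
      (∑ m ∈ Finset.Ico i j, a m) + (∑ m ∈ Finset.Ico j k, a m)
        = (∑ m ∈ Finset.Ico i k, a m) ∧
      (∑ m ∈ Finset.Ico i j, a m) ∣ (∑ m ∈ Finset.Ico j k, a m) :=
  stmt_16_general l N hRamsey a hdvd c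
end

section
/- Let S'(k) be the least N such that every k-coloring of {1,...,N} admits monochromatic x, y, z with x + y = z and x ∣ y. Then for every prime p > S'(k), the least positive integer r such that r and r+1 are both k-th power residues mod p satisfies r ≤ S'(k); in particular Λ(k,2) ≤ S'(k). -/
/-! Colour each `n` with `p ∤ n` by the class of `n` in `(ZMod p)ˣ` modulo `k`-th powers; there are
`gcd (k, p - 1) ≤ k` classes. A monochromatic `x`, `y = m x`, `z = (m + 1) x` in `[1, S']` then makes
`m = y / x` and `m + 1 = z / x` both `k`-th power residues. -/

theorem IsCyclic.exists_fin_coloring_inv_mul_eq_pow {G : Type*} [CommGroup G] [IsCyclic G] [Finite G]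
    {k : ℕ} (hk : 0 < k) : ∃ c : G → Fin k, ∀ a b, c a = c b → ∃ s : G, s ^ k = a⁻¹ * b := by
  let Q := G ⧸ (powMonoidHom k : G →* G).range
  have hQ : Nat.card Q ≤ k := by
    rw [← Subgroup.index, IsCyclic.index_powMonoidHom_range]
    exact Nat.gcd_le_right _ hk
  refine ⟨fun a ↦ Fin.castLE hQ (Finite.equivFin Q a), fun a b hab ↦ ?_⟩
  have hab' : (a : Q) = b := (Finite.equivFin Q).injective (Fin.castLE_injective hQ hab)
  exact QuotientGroup.eq.mp hab'

theorem FiniteField.exists_fin_coloring_div_eq_pow {F : Type*} [Field F] [Finite F]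
    {k : ℕ} (hk : 0 < k) :
    ∃ c : F → Fin k, ∀ a b, a ≠ 0 → b ≠ 0 → c a = c b → ∃ s ≠ 0, s ^ k = b / a := by
  classical
  obtain ⟨c, hc⟩ := IsCyclic.exists_fin_coloring_inv_mul_eq_pow (G := Fˣ) hk
  refine ⟨fun a ↦ if ha : a = 0 then ⟨0, hk⟩ else c (Units.mk0 a ha), fun a b ha hb hab ↦ ?_⟩
  simp only [dif_neg ha, dif_neg hb] at hab
  obtain ⟨s, hs⟩ := hc _ _ hab
  refine ⟨s, s.ne_zero, ?_⟩
  rw [← Units.val_pow_eq_pow_val, hs, div_eq_inv_mul]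
  simp

theorem stmt_19_general (k : ℕ) (hk : 0 < k) (S' : ℕ)
    (hP : ∀ c : ℕ → Fin k, ∃ x y z : ℕ,
      0 < x ∧ x ≤ S' ∧ 0 < y ∧ y ≤ S' ∧ 0 < z ∧ z ≤ S' ∧
      c x = c y ∧ c y = c z ∧ x + y = z ∧ x ∣ y) :
    ∀ p : ℕ, p.Prime → p > S' →
      ∃ r : ℕ, 0 < r ∧ r ≤ S' ∧
        (∃ s : ZMod p, s ≠ 0 ∧ s ^ k = (r : ZMod p)) ∧
        (∃ s : ZMod p, s ≠ 0 ∧ s ^ k = ((r + 1 : ℕ) : ZMod p)) := by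
  intro p hp hpS
  have : Fact p.Prime := ⟨hp⟩
  obtain ⟨c, hc⟩ := FiniteField.exists_fin_coloring_div_eq_pow (F := ZMod p) hk
  obtain ⟨x, y, z, hx, hxS, hy, hyS, hz, hzS, hxy, hyz, rfl, m, rfl⟩ := hP (fun n ↦ c n)
  have cast_ne_zero : ∀ n, 0 < n → n ≤ S' → (n : ZMod p) ≠ 0 := fun n hn hnS ↦ by
    rw [Ne, ZMod.natCast_eq_zero_iff]
    exact fun h ↦ absurd (Nat.le_of_dvd hn h) (by omega)
  have hx0 := cast_ne_zero x hx hxS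
  have hm : 0 < m := Nat.pos_of_mul_pos_left hy
  refine ⟨m, hm, le_trans (Nat.le_mul_of_pos_left m hx) hyS, ?_, ?_⟩
  · obtain ⟨s, hs0, hs⟩ := hc _ _ hx0 (cast_ne_zero _ hy hyS) hxy
    exact ⟨s, hs0, by rw [hs]; push_cast; field_simp⟩
  · obtain ⟨s, hs0, hs⟩ := hc _ _ hx0 (cast_ne_zero _ hz hzS) (hxy.trans hyz)
    exact ⟨s, hs0, by rw [hs, show x + x * m = x * (m + 1) by ring]; push_cast; field_simp⟩

theorem stmt_19 (k : ℕ) (hk : 0 < k) (S' : ℕ)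
    (hP : ∀ c : ℕ → Fin k, ∃ x y z : ℕ,
      0 < x ∧ x ≤ S' ∧ 0 < y ∧ y ≤ S' ∧ 0 < z ∧ z ≤ S' ∧
      c x = c y ∧ c y = c z ∧ x + y = z ∧ x ∣ y)
    (hleast : ∀ N : ℕ, (∀ c : ℕ → Fin k, ∃ x y z : ℕ,
      0 < x ∧ x ≤ N ∧ 0 < y ∧ y ≤ N ∧ 0 < z ∧ z ≤ N ∧
      c x = c y ∧ c y = c z ∧ x + y = z ∧ x ∣ y) → S' ≤ N) :
    ∀ p : ℕ, p.Prime → p > S' →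
      ∃ r : ℕ, 0 < r ∧ r ≤ S' ∧
        (∃ s : ZMod p, s ≠ 0 ∧ s ^ k = (r : ZMod p)) ∧
        (∃ s : ZMod p, s ≠ 0 ∧ s ^ k = ((r + 1 : ℕ) : ZMod p)) :=
  stmt_19_general k hk S' hP
end
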